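/- (Exact shortcut) For every nonempty S ⊆ {1,…,m}: d(S) = max over integers 1 ≤ u ≤ |S| of (1 − u + |{i ∈ S : h·p_i ≤ u·α}|). -/

import Mathlib

open Finset

attribute [local instance] Classical.propDecidable

/-- The `i`-th smallest (1-indexed) element of the multiset of p-values `{p_j : j ∈ I}`. -/
noncomputable def pOrd {m : ℕ} (p : Fin m → ℝ) (I : Finset (Fin m)) (i : ℕ) : ℝ :=
  ((I.val.map p).sort (· ≤ ·)).getD (i - 1) 0

/-- The Simes local test rejects `H_I` (written `I ∈ 𝒰`) iff `I` is nonempty and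
`|I|·p_{(i:I)} ≤ i·α` for at least one `1 ≤ i ≤ |I|`. -/
def SimesU {m : ℕ} (α : ℝ) (p : Fin m → ℝ) (I : Finset (Fin m)) : Prop :=
  ∃ i, 1 ≤ i ∧ i ≤ I.card ∧ (I.card : ℝ) * pOrd p I i ≤ (i : ℝ) * α

/-- Closed testing rejects `H_I` (written `I ∈ 𝒳`) iff `J ∈ 𝒰` for every `J ⊇ I`. -/
def ClosedX {m : ℕ} (α : ℝ) (p : Fin m → ℝ) (I : Finset (Fin m)) : Prop :=
  ∀ J, I ⊆ J → SimesU α p J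

/-- `K_i = {r_{m−i+1},…,r_m}`: the `i` indices with largest p-values. -/
def Kset {m : ℕ} (r : Fin m → Fin m) (i : ℕ) : Finset (Fin m) :=
  (Finset.univ.filter fun j : Fin m => m - i ≤ (j : ℕ)).image r

/-- `L_i = {r_1,…,r_i}`: the `i` indices with smallest p-values. -/
def Lset {m : ℕ} (r : Fin m → Fin m) (i : ℕ) : Finset (Fin m) :=
  (Finset.univ.filter fun j : Fin m => (j : ℕ) < i).image r

/-- `h = max{0 ≤ i ≤ m : K_i ∉ 𝒰}`. -/
noncomputable def hval {m : ℕ} (α : ℝ) (p : Fin m → ℝ) (r : Fin m → Fin m) : ℕ :=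
  sSup {i | i ≤ m ∧ ¬ SimesU α p (Kset r i)}

/-- `t(S) = max{|I| : I ⊆ S, I ∉ 𝒳}`. -/
noncomputable def tval {m : ℕ} (α : ℝ) (p : Fin m → ℝ) (S : Finset (Fin m)) : ℕ :=
  sSup {k | ∃ I, I ⊆ S ∧ ¬ ClosedX α p I ∧ I.card = k}

/-- `d(S) = |S| − t(S)`. -/
noncomputable def dval {m : ℕ} (α : ℝ) (p : Fin m → ℝ) (S : Finset (Fin m)) : ℕ :=
  S.card - tval α p S

/-- `q_α(S) = t(S)/|S|` for nonempty `S`, and `0` for `S = ∅`. -/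
noncomputable def qval {m : ℕ} (α : ℝ) (p : Fin m → ℝ) (S : Finset (Fin m)) : ℝ :=
  if S = ∅ then 0 else (tval α p S : ℝ) / S.card

/-- `z = 0` if `h = m`, else `z = min{m−h ≤ i ≤ m : h·p_{(i)} ≤ (i−m+h+1)·α}`. -/
noncomputable def zval {m : ℕ} (α : ℝ) (p : Fin m → ℝ) (r : Fin m → Fin m) : ℕ :=
  if hval α p r = m then 0 else
    sInf {i | m - hval α p r ≤ i ∧ i ≤ m ∧
      (hval α p r : ℝ) * pOrd p Finset.univ i ≤ ((i : ℝ) - m + hval α p r + 1) * α}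

/-- `b_q = max{1 ≤ i ≤ m : m·p_{(i)} ≤ i·q}` (with `b_q = 0` if no such `i`). -/
noncomputable def bval {m : ℕ} (q : ℝ) (p : Fin m → ℝ) : ℕ :=
  sSup {i | 1 ≤ i ∧ i ≤ m ∧ (m : ℝ) * pOrd p Finset.univ i ≤ (i : ℝ) * q}

/-!
Write `h` for `hval`. Closed testing rejects `H_I` exactly when, for some `u ≥ 1`, at least `u`
indices `i ∈ I` satisfy `h·p_i ≤ u·α`. If so, a superset `J` with `|J| ≤ h` is Simes-rejected with
the same `u`, and one with `|J| > h` is rejected because `K_{|J|}` is, and `K_{|J|}`, holding the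
largest p-values, has the fewest small p-values among sets of its size. If not, then `|I| ≤ h`, and
padding `I` with the largest remaining p-values up to size `h` yields a superset that is no easier
to reject than `K_h`, which is not rejected.

So `t(S)` is the largest size of an `I ⊆ S` in which, for every `u ≥ 1`, fewer than `u` indices
satisfy `h·p_i ≤ u·α`. Counting gives `|S| - t(S) ≥ 1 - u + |{i ∈ S : h·p_i ≤ u·α}|` for every
`u`, and the top `|S| - M` p-values of `S`, `M` being the maximum on the right, form such a set.
-/

theorem List.Pairwise.getElem_le_iff_lt_countP {β : Type*} [LinearOrder β] {l : List β}
    (hl : l.Pairwise (· ≤ ·)) {n : ℕ} (hn : n < l.length) (c : β) :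
    l[n] ≤ c ↔ n < l.countP (· ≤ c) := by
  have hmono : ∀ {i j} (hi : i < l.length) (hj : j < l.length), i ≤ j → l[i] ≤ l[j] :=
    fun hi hj hij => hl.rel_get_of_le (a := ⟨_, hi⟩) (b := ⟨_, hj⟩) hij
  constructor
  · intro hc
    have htake : (l.take (n + 1)).countP (· ≤ c) = n + 1 := by
      rw [List.countP_eq_length.2, List.length_take, min_eq_left hn]
      intro x hx
      obtain ⟨j, hj, rfl⟩ := List.getElem_of_mem hx
      simp only [List.getElem_take, decide_eq_true_eq]
      exact (hmono _ hn (by simp at hj; omega)).trans hc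
    exact Nat.lt_of_succ_le (htake.symm.trans_le (List.take_sublist _ _).countP_le)
  · intro hcount
    by_contra! hc
    have hdrop : (l.drop n).countP (· ≤ c) = 0 := by
      rw [List.countP_eq_zero]
      intro x hx
      obtain ⟨j, hj, rfl⟩ := List.getElem_of_mem hx
      simp only [List.getElem_drop, decide_eq_true_eq, not_le]
      exact hc.trans_le (hmono hn _ (by omega))
    have hsplit := List.countP_append (l₁ := l.take n) (l₂ := l.drop n) (p := (· ≤ c))
    rw [List.take_append_drop, hdrop] at hsplit
    have := List.countP_le_length (l := l.take n) (p := (· ≤ c))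
    simp only [List.length_take] at this
    omega

section Counting

variable {ι : Type*} {Q : ι → Prop} [DecidablePred Q]

theorem card_add_card_filter_le_of_subset {I S : Finset ι} (hIS : I ⊆ S) :
    #I + #(S.filter Q) ≤ #S + #(I.filter Q) := by
  have hsub : S.filter Q ⊆ I.filter Q ∪ (S \ I) := by
    intro x hx
    rw [mem_filter] at hx
    by_cases hxI : x ∈ I
    · exact mem_union_left _ (mem_filter.2 ⟨hxI, hx.2⟩)
    · exact mem_union_right _ (mem_sdiff.2 ⟨hx.1, hxI⟩)
  have := (card_le_card hsub).trans (card_union_le _ _)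
  rw [card_sdiff_of_subset hIS] at this
  have := card_le_card hIS
  omega

theorem card_sdiff_add_card_filter_le [DecidableEq ι] {T S : Finset ι} (hTS : T ⊆ S)
    (hQ : ∀ x ∈ S \ T, Q x) :
    #(S \ T) + #(T.filter Q) ≤ #(S.filter Q) := by
  rw [← card_union_of_disjoint (disjoint_sdiff_self_left.mono_right (filter_subset _ _))]
  refine card_le_card (union_subset (fun x hx => mem_filter.2 ⟨(mem_sdiff.1 hx).1, hQ x hx⟩) ?_)
  exact filter_subset_filter _ hTS

theorem card_filter_le_card_filter_of_forall_notMem {J K : Finset ι} (hQ : ∀ x ∉ J, Q x)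
    (hJK : #J ≤ #K) : #(J.filter Q) ≤ #(K.filter Q) := by
  have hsub : K.filter (¬ Q ·) ⊆ J.filter (¬ Q ·) := by
    intro x hx
    rw [mem_filter] at hx ⊢
    exact ⟨by_contra fun hxJ => hx.2 (hQ x hxJ), hx.2⟩
  have := card_le_card hsub
  have := card_filter_add_card_filter_not (s := J) Q
  have := card_filter_add_card_filter_not (s := K) Q
  omega

theorem exists_subset_card_eq_forall_le [DecidableEq ι] {β : Type*} [LinearOrder β] (f : ι → β)
    {A : Finset ι} {w : ℕ} (hw : w ≤ #A) : ∃ T ⊆ A, #T = w ∧ ∀ x ∈ A \ T, ∀ y ∈ T, f x ≤ f y := by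
  induction A using Finset.induction_on_max_value f generalizing w with
  | empty => exact ⟨∅, empty_subset _, by simp_all, by simp⟩
  | insert a s has hmax ih =>
    rcases w with _ | w
    · exact ⟨∅, empty_subset _, rfl, by simp⟩
    obtain ⟨T, hTs, hTw, hT⟩ := ih (w := w) (by rw [card_insert_of_notMem has] at hw; omega)
    refine ⟨insert a T, insert_subset_insert a hTs, ?_, ?_⟩
    · rw [card_insert_of_notMem (fun haT => has (hTs haT)), hTw]
    · intro x hx y hy
      have hx' : x ∈ s \ T := by
        simp only [mem_sdiff, mem_insert, not_or] at hx ⊢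
        exact ⟨hx.1.resolve_left hx.2.1, hx.2.2⟩
      rcases mem_insert.1 hy with rfl | hyT
      · exact hmax x (mem_sdiff.1 hx').1
      · exact hT x hx' y hyT

theorem exists_subset_card_eq_sub_forall_card_filter_lt {β : Type*} [LinearOrder β] (f : ι → β)
    (Q : ℕ → ι → Prop) [∀ u, DecidablePred (Q u)] (hQ : ∀ u x y, f x ≤ f y → Q u y → Q u x)
    {S : Finset ι} {M : ℕ} (hM : ∀ u, 1 ≤ u → u ≤ #S → #(S.filter (Q u)) < M + u) :
    ∃ T ⊆ S, #T = #S - M ∧ ∀ u, 1 ≤ u → #(T.filter (Q u)) < u := by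
  obtain ⟨T, hTS, hT, htop⟩ := exists_subset_card_eq_forall_le f (Nat.sub_le #S M)
  refine ⟨T, hTS, hT, fun u hu => ?_⟩
  by_contra! huT
  obtain ⟨y, hy⟩ : (T.filter (Q u)).Nonempty := card_pos.1 (hu.trans huT)
  rw [mem_filter] at hy
  have hS := card_sdiff_add_card_filter_le hTS fun x hx => hQ u x y (htop x hx y hy.1) hy.2
  have hSu := hM u hu ((huT.trans (card_filter_le _ _)).trans (card_le_card hTS))
  have := card_filter_le S (Q u)
  rw [card_sdiff_of_subset hTS, hT] at hS
  omega

end Counting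

section ClosedTesting

variable {m : ℕ} {α : ℝ} {p : Fin m → ℝ} {r : Fin m → Fin m}

theorem pOrd_le_iff (J : Finset (Fin m)) {i : ℕ} (hi : 1 ≤ i) (hiJ : i ≤ #J) (c : ℝ) :
    pOrd p J i ≤ c ↔ i ≤ #(J.filter (p · ≤ c)) := by
  set l := (J.val.map p).sort (· ≤ ·) with hl
  have hlen : l.length = #J := by simp [l]
  have hcount : l.countP (· ≤ c) = #(J.filter (p · ≤ c)) := by
    rw [← Multiset.coe_countP, Multiset.sort_eq, Multiset.countP_map, card_def, filter_val]
  rw [pOrd, ← hl, List.getD_eq_getElem _ _ (by omega),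
    (Multiset.pairwise_sort _ _).getElem_le_iff_lt_countP, hcount]
  omega

theorem simesU_iff (J : Finset (Fin m)) :
    SimesU α p J ↔ ∃ i, 1 ≤ i ∧ i ≤ #J ∧ i ≤ #(J.filter fun x => (#J : ℝ) * p x ≤ i * α) := by
  refine exists_congr fun i => and_congr_right fun hi => and_congr_right fun hiJ => ?_
  have hJ : (0 : ℝ) < #J := Nat.cast_pos.2 (hi.trans hiJ)
  simp only [mul_comm (#J : ℝ), ← le_div_iff₀ hJ]
  exact pOrd_le_iff J hi hiJ _

theorem card_Kset (hr : Function.Injective r) {l : ℕ} (hl : l ≤ m) : #(Kset r l) = l := by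
  have := card_filter_add_card_filter_not (s := (univ : Finset (Fin m)))
    fun j : Fin m => (j : ℕ) < m - l
  simp only [not_lt, Fin.card_filter_val_lt, card_univ, Fintype.card_fin] at this
  rw [Kset, card_image_of_injective _ hr]
  omega

theorem le_of_mem_Kset (hr : Function.Surjective r) (hmono : ∀ i j, i ≤ j → p (r i) ≤ p (r j))
    {l : ℕ} {x y : Fin m} (hx : x ∉ Kset r l) (hy : y ∈ Kset r l) : p x ≤ p y := by
  obtain ⟨a, rfl⟩ := hr x
  obtain ⟨b, hb, rfl⟩ := mem_image.1 hy
  have ha : ¬ m - l ≤ (a : ℕ) := fun ha => hx (mem_image_of_mem r (by simpa using ha))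
  exact hmono a b (by simp at hb; omega)

theorem card_filter_Kset_le (hr : Function.Bijective r) (hmono : ∀ i j, i ≤ j → p (r i) ≤ p (r j))
    {l : ℕ} (hl : l ≤ m) {B : Finset (Fin m)} (hB : l ≤ #B) {Q : Fin m → Prop} [DecidablePred Q]
    (hQ : ∀ x y, p x ≤ p y → Q y → Q x) : #((Kset r l).filter Q) ≤ #(B.filter Q) := by
  rcases ((Kset r l).filter Q).eq_empty_or_nonempty with hK | ⟨y, hy⟩
  · simp [hK]
  rw [mem_filter] at hy
  refine card_filter_le_card_filter_of_forall_notMem (fun x hx => ?_) (by rwa [card_Kset hr.1 hl])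
  exact hQ x y (le_of_mem_Kset hr.2 hmono hx hy.1) hy.2

theorem hval_mem : hval α p r ∈ {i | i ≤ m ∧ ¬ SimesU α p (Kset r i)} := by
  refine Nat.sSup_mem ⟨0, Nat.zero_le m, ?_⟩ ⟨m, fun i hi => hi.1⟩
  have hK : Kset r 0 = ∅ := by simp [Kset]
  simp [hK, SimesU]

theorem simesU_Kset_of_hval_lt {l : ℕ} (hl : l ≤ m) (hlt : hval α p r < l) :
    SimesU α p (Kset r l) :=
  by_contra fun h => hlt.not_ge (le_csSup ⟨m, fun _ hi => hi.1⟩ ⟨hl, h⟩)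

theorem closedX_of_le_card_filter (hp0 : ∀ i, 0 ≤ p i) (hr : Function.Bijective r)
    (hmono : ∀ i j, i ≤ j → p (r i) ≤ p (r j)) {I : Finset (Fin m)} {u : ℕ} (hu : 1 ≤ u)
    (hI : u ≤ #(I.filter fun x => (hval α p r : ℝ) * p x ≤ u * α)) : ClosedX α p I := by
  intro J hIJ
  have huJ : u ≤ #J := hI.trans ((card_filter_le _ _).trans (card_le_card hIJ))
  have hJm : #J ≤ m := (card_le_univ J).trans_eq (Fintype.card_fin m)
  rw [simesU_iff]
  rcases le_or_gt #J (hval α p r) with hJh | hhJ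
  · refine ⟨u, hu, huJ, hI.trans (card_le_card fun x hx => ?_)⟩
    rw [mem_filter] at hx ⊢
    exact ⟨hIJ hx.1, (mul_le_mul_of_nonneg_right (by exact_mod_cast hJh) (hp0 x)).trans hx.2⟩
  · obtain ⟨i, hi, hiJ, hK⟩ := (simesU_iff _).1 (simesU_Kset_of_hval_lt hJm hhJ)
    rw [card_Kset hr.1 hJm] at hiJ hK
    refine ⟨i, hi, hiJ, hK.trans (card_filter_Kset_le hr hmono hJm le_rfl fun x y hxy hy => ?_)⟩
    exact (mul_le_mul_of_nonneg_left hxy (Nat.cast_nonneg _)).trans hy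

theorem card_le_hval_of_forall_card_filter_lt (hp0 : ∀ i, 0 ≤ p i) (hr : Function.Bijective r)
    (hmono : ∀ i j, i ≤ j → p (r i) ≤ p (r j)) {I : Finset (Fin m)}
    (hI : ∀ u : ℕ, 1 ≤ u → #(I.filter fun x => (hval α p r : ℝ) * p x ≤ u * α) < u) :
    #I ≤ hval α p r := by
  set h := hval α p r
  by_contra! hhI
  have hh : h + 1 ≤ m := hhI.trans_le ((card_le_univ I).trans_eq (Fintype.card_fin m))
  obtain ⟨i, hi, hih, hK⟩ := (simesU_iff _).1 (simesU_Kset_of_hval_lt hh (Nat.lt_succ_self h))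
  rw [card_Kset hr.1 hh] at hih hK
  have hKI := card_filter_Kset_le hr hmono hh hhI (Q := fun x => (h : ℝ) * p x ≤ i * α)
    fun x y hxy hy => (mul_le_mul_of_nonneg_left hxy (Nat.cast_nonneg _)).trans hy
  refine (hI i hi).not_ge (hK.trans ((card_le_card fun x hx => ?_).trans hKI))
  rw [mem_filter] at hx ⊢
  refine ⟨hx.1, (mul_le_mul_of_nonneg_right ?_ (hp0 x)).trans hx.2⟩
  exact_mod_cast Nat.le_succ h

theorem not_closedX_of_forall_card_filter_lt (hp0 : ∀ i, 0 ≤ p i) (hr : Function.Bijective r)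
    (hmono : ∀ i j, i ≤ j → p (r i) ≤ p (r j)) {I : Finset (Fin m)}
    (hI : ∀ u : ℕ, 1 ≤ u → #(I.filter fun x => (hval α p r : ℝ) * p x ≤ u * α) < u) :
    ¬ ClosedX α p I := by
  set h := hval α p r
  obtain ⟨hhm, hKh⟩ : h ≤ m ∧ ¬ SimesU α p (Kset r h) := hval_mem
  have hIh : #I ≤ h := card_le_hval_of_forall_card_filter_lt hp0 hr hmono hI
  obtain ⟨T, hTI, hT, htop⟩ := exists_subset_card_eq_forall_le p (A := univ \ I) (w := h - #I)
    (by rw [card_univ_sdiff, Fintype.card_fin]; omega)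
  have hJ : #(I ∪ T) = h := by
    rw [card_union_of_disjoint (disjoint_of_subset_right hTI disjoint_sdiff)]
    omega
  intro hX
  obtain ⟨i, hi, hiJ, hJi⟩ := (simesU_iff _).1 (hX _ subset_union_left)
  rw [hJ] at hiJ hJi
  refine hJi.not_gt ?_
  rcases (T.filter fun x => (h : ℝ) * p x ≤ i * α).eq_empty_or_nonempty with hTi | ⟨y, hy⟩
  · rw [filter_union, hTi, union_empty]
    exact hI i hi
  rw [mem_filter] at hy
  -- everything outside `I ∪ T` lies below `y ∈ T`, so `I ∪ T` does no better than `K_h`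
  refine (card_filter_le_card_filter_of_forall_notMem (K := Kset r h) (fun x hx => ?_)
    (by rw [hJ, card_Kset hr.1 hhm])).trans_lt ?_
  · have hx' : x ∈ (univ \ I) \ T := by simp_all
    exact (mul_le_mul_of_nonneg_left (htop x hx' y hy.1) (Nat.cast_nonneg _)).trans hy.2
  · by_contra! hKi
    exact hKh ((simesU_iff _).2 ⟨i, hi, by rwa [card_Kset hr.1 hhm], by rwa [card_Kset hr.1 hhm]⟩)

theorem not_closedX_iff (hp0 : ∀ i, 0 ≤ p i) (hr : Function.Bijective r)
    (hmono : ∀ i j, i ≤ j → p (r i) ≤ p (r j)) {I : Finset (Fin m)} :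
    ¬ ClosedX α p I ↔ ∀ u : ℕ, 1 ≤ u → #(I.filter fun x => (hval α p r : ℝ) * p x ≤ u * α) < u :=
  ⟨fun hX _ hu => not_le.1 fun hI => hX (closedX_of_le_card_filter hp0 hr hmono hu hI),
    not_closedX_of_forall_card_filter_lt hp0 hr hmono⟩

theorem bddAbove_tval_set (S : Finset (Fin m)) :
    BddAbove {k | ∃ I, I ⊆ S ∧ ¬ ClosedX α p I ∧ #I = k} :=
  ⟨#S, by rintro _ ⟨I, hIS, -, rfl⟩; exact card_le_card hIS⟩

theorem exists_not_closedX_card_eq_tval (S : Finset (Fin m)) :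
    ∃ I, I ⊆ S ∧ ¬ ClosedX α p I ∧ #I = tval α p S :=
  Nat.sSup_mem (s := {k | ∃ I, I ⊆ S ∧ ¬ ClosedX α p I ∧ #I = k})
    ⟨0, ∅, empty_subset S, fun hX => by simpa [SimesU] using hX ∅ subset_rfl, rfl⟩
    (bddAbove_tval_set S)

theorem card_le_tval {S I : Finset (Fin m)} (hIS : I ⊆ S) (hI : ¬ ClosedX α p I) :
    #I ≤ tval α p S :=
  le_csSup (bddAbove_tval_set S) ⟨I, hIS, hI, rfl⟩

end ClosedTesting

theorem stmt4_general
    (m : ℕ) (α : ℝ)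
    (p : Fin m → ℝ) (hp : ∀ i, 0 ≤ p i ∧ p i ≤ 1)
    (r : Fin m → Fin m) (hr : Function.Bijective r)
    (hmono : ∀ i j : Fin m, i ≤ j → p (r i) ≤ p (r j))
    (S : Finset (Fin m)) (hS : S.Nonempty) :
    (dval α p S : ℤ) =
      (Finset.Icc 1 S.card).sup' (Finset.nonempty_Icc.mpr hS.card_pos)
        (fun u => 1 - (u : ℤ) +
          ((S.filter fun i => (hval α p r : ℝ) * p i ≤ (u : ℝ) * α).card : ℤ)) := by
  have hp0 i : 0 ≤ p i := (hp i).1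
  set Q : ℕ → Fin m → Prop := fun u i => (hval α p r : ℝ) * p i ≤ u * α
  set F : ℕ → ℤ := fun u => 1 - (u : ℤ) + #(S.filter (Q u))
  obtain ⟨I, hIS, hI, hIt⟩ := exists_not_closedX_card_eq_tval (α := α) (p := p) S
  rw [not_closedX_iff hp0 hr hmono] at hI
  have ht : tval α p S ≤ #S := hIt ▸ card_le_card hIS
  rw [dval, Nat.cast_sub ht]
  refine le_antisymm ?_ (sup'_le _ _ fun u hu => ?_)
  · set M := (Icc 1 #S).sup' (nonempty_Icc.2 hS.card_pos) F
    have hM : 0 ≤ M := le_sup'_of_le F (mem_Icc.2 ⟨le_rfl, hS.card_pos⟩) (by simp [F])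
    obtain ⟨T, hTS, hT, hTQ⟩ := exists_subset_card_eq_sub_forall_card_filter_lt p Q
      (fun u x y hxy hy => (mul_le_mul_of_nonneg_left hxy (Nat.cast_nonneg _)).trans hy)
      (M := M.toNat) fun u hu huS => by
        have : F u ≤ M := le_sup' F (mem_Icc.2 ⟨hu, huS⟩)
        simp only [F] at this
        omega
    have := card_le_tval hTS ((not_closedX_iff hp0 hr hmono).2 hTQ)
    omega
  · have hcount := card_add_card_filter_le_of_subset (Q := Q u) hIS
    have hIu := hI u (mem_Icc.1 hu).1
    simp only [F, Q] at hcount ⊢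
    omega

theorem stmt4
    (m : ℕ) (hm : 1 ≤ m) (α : ℝ) (hα : 0 ≤ α ∧ α ≤ 1)
    (p : Fin m → ℝ) (hp : ∀ i, 0 ≤ p i ∧ p i ≤ 1)
    (r : Fin m → Fin m) (hr : Function.Bijective r)
    (hmono : ∀ i j : Fin m, i ≤ j → p (r i) ≤ p (r j))
    (S : Finset (Fin m)) (hS : S.Nonempty) :
    (dval α p S : ℤ) =
      (Finset.Icc 1 S.card).sup' (Finset.nonempty_Icc.mpr hS.card_pos)
        (fun u => 1 - (u : ℤ) +
          ((S.filter fun i => (hval α p r : ℝ) * p i ≤ (u : ℝ) * α).card : ℤ)) :=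
  stmt4_general m α p hp r hr hmono S hS
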